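/- Let π be a rigid 321-avoiding permutation of size k, τ a 321-avoiding permutation of size n, and f a rigid mapping from π to τ. Then f is an embedding of π into τ if and only if for every position x of π: (i) if x^← is defined then (f(x^←))^→_{T(x)} is defined and (f(x^←))^→_{T(x)} ≤ f(x) as positions, and (ii) if x^↓ is defined then (f(x^↓))^↑_{T(x)} is defined and (f(x^↓))^↑_{T(x)} ≤ f(x) as positions. -/
import Mathlib


/-- `f` is an embedding of the permutation `π` (of size `k`) into the permutation `τ`
(of size `n`): a strictly increasing map on positions that preserves the relative
order of values. -/
def IsEmbedding {k n : ℕ} (π : Equiv.Perm (Fin k)) (τ : Equiv.Perm (Fin n))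
    (f : Fin k → Fin n) : Prop :=
  StrictMono f ∧ ∀ i j : Fin k, π i < π j ↔ τ (f i) < τ (f j)

/-- The permutation `τ` avoids the pattern `321`. -/
def Avoids321 {n : ℕ} (τ : Equiv.Perm (Fin n)) : Prop :=
  ¬ ∃ i j k : Fin n, i < j ∧ j < k ∧ τ k < τ j ∧ τ j < τ i

/-- Position `i` is an upper element of `τ`: it participates as the `2` in a copy of `21`. -/
def UpperElt {n : ℕ} (τ : Equiv.Perm (Fin n)) (i : Fin n) : Prop :=
  ∃ j : Fin n, i < j ∧ τ j < τ i

/-- Position `i` is a lower element of `τ`: it participates as the `1` in a copy of `21`. -/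
def LowerElt {n : ℕ} (τ : Equiv.Perm (Fin n)) (i : Fin n) : Prop :=
  ∃ j : Fin n, j < i ∧ τ i < τ j

/-- Position `i` is a fluid element of `τ`: neither upper nor lower. -/
def FluidElt {n : ℕ} (τ : Equiv.Perm (Fin n)) (i : Fin n) : Prop :=
  ¬ UpperElt τ i ∧ ¬ LowerElt τ i

/-- A permutation is rigid if every position is an upper or a lower element. -/
def Rigid {n : ℕ} (τ : Equiv.Perm (Fin n)) : Prop :=
  ∀ i : Fin n, UpperElt τ i ∨ LowerElt τ i

/-- `f : π → τ` is a rigid mapping: it sends upper elements to upper elements and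
lower elements to lower elements. -/
def RigidMapping {k n : ℕ} (π : Equiv.Perm (Fin k)) (τ : Equiv.Perm (Fin n))
    (f : Fin k → Fin n) : Prop :=
  (∀ x : Fin k, UpperElt π x → UpperElt τ (f x)) ∧
  (∀ x : Fin k, LowerElt π x → LowerElt τ (f x))

/-- `q` is the leftmost position strictly to the right of `p` satisfying `P`
(this is `p^→_T` when `P` is "being a type-`T` element"). -/
def IsNextRight {n : ℕ} (P : Fin n → Prop) (p q : Fin n) : Prop :=
  P q ∧ p < q ∧ ∀ r : Fin n, P r → p < r → q ≤ r

/-- `q` is the position with least value among positions satisfying `P` whose value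
exceeds that of `p` (this is `p^↑_T` when `P` is "being a type-`T` element"). -/
def IsNextAbove {n : ℕ} (τ : Equiv.Perm (Fin n)) (P : Fin n → Prop) (p q : Fin n) : Prop :=
  P q ∧ τ p < τ q ∧ ∀ r : Fin n, P r → τ p < τ r → τ q ≤ τ r

/-- In a 321-avoiding permutation, values of upper elements increase with position. -/
lemma upper_mono {n : ℕ} {τ : Equiv.Perm (Fin n)} (hτ : Avoids321 τ)
    {i j : Fin n} (hi : UpperElt τ i) (hj : UpperElt τ j) (hij : i < j) : τ i < τ j := by
  by_contra h
  push_neg at h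
  have hne : τ j ≠ τ i := fun e => (ne_of_lt hij) (τ.injective e).symm
  obtain ⟨l, hjl, hl⟩ := hj
  exact hτ ⟨i, j, l, hij, hjl, hl, lt_of_le_of_ne h hne⟩

/-- In a 321-avoiding permutation, values of lower elements increase with position. -/
lemma lower_mono {n : ℕ} {τ : Equiv.Perm (Fin n)} (hτ : Avoids321 τ)
    {i j : Fin n} (hi : LowerElt τ i) (hj : LowerElt τ j) (hij : i < j) : τ i < τ j := by
  by_contra h
  push_neg at h
  have hne : τ j ≠ τ i := fun e => (ne_of_lt hij) (τ.injective e).symm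
  obtain ⟨m, hmi, hm⟩ := hi
  exact hτ ⟨m, i, j, hmi, hij, lt_of_le_of_ne h hne, hm⟩

lemma nextRight_exists {n : ℕ} {P : Fin n → Prop} {p t : Fin n} (ht : P t) (hpt : p < t) :
    ∃ q, IsNextRight P p q ∧ q ≤ t := by
  classical
  obtain ⟨q, hq, hmin⟩ := Finset.exists_min_image
    (Finset.univ.filter fun r => P r ∧ p < r) id ⟨t, by simp [ht, hpt]⟩
  simp only [Finset.mem_filter, Finset.mem_univ, true_and, id_eq] at hq hmin
  exact ⟨q, ⟨hq.1, hq.2, fun r hr hpr => hmin r ⟨hr, hpr⟩⟩, hmin t ⟨ht, hpt⟩⟩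

lemma nextAbove_exists {n : ℕ} (τ : Equiv.Perm (Fin n)) {P : Fin n → Prop}
    (hmono : ∀ i j : Fin n, P i → P j → i < j → τ i < τ j)
    {p t : Fin n} (ht : P t) (hpt : τ p < τ t) :
    ∃ q, IsNextAbove τ P p q ∧ q ≤ t := by
  classical
  obtain ⟨q, hq, hmin⟩ := Finset.exists_min_image
    (Finset.univ.filter fun r => P r ∧ τ p < τ r) (fun r => τ r) ⟨t, by simp [ht, hpt]⟩
  simp only [Finset.mem_filter, Finset.mem_univ, true_and] at hq hmin
  refine ⟨q, ⟨hq.1, hq.2, fun r hr hpr => hmin r ⟨hr, hpr⟩⟩, ?_⟩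
  by_contra hc
  have htq : t < q := not_le.mp hc
  exact absurd (hmin t ⟨ht, hpt⟩) (not_le.mpr (hmono t q ht hq.1 htq))

lemma strictMono_of_succ {k : ℕ} {α : Type*} [Preorder α] {g : Fin k → α}
    (h : ∀ i j : Fin k, (i : ℕ) + 1 = (j : ℕ) → g i < g j) : StrictMono g := by
  intro i j hij
  obtain ⟨d, hd⟩ : ∃ d, (j : ℕ) = (i : ℕ) + d + 1 := ⟨(j : ℕ) - i - 1, by omega⟩
  clear hij
  induction d generalizing j with
  | zero => exact h i j (by omega)
  | succ d ih =>
    have hjk : (j : ℕ) < k := j.isLt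
    set m : Fin k := ⟨(i : ℕ) + d + 1, by omega⟩ with hmdef
    have h1 : g i < g m := ih (by simp [hmdef])
    exact lt_trans h1 (h m j (by simp [hmdef]; omega))

/-- a rigid mapping `f` from the rigid 321-avoiding `π` to the 321-avoiding
`τ` is an embedding iff for every position `x` of `π`: (i) for the left neighbour
`y = x^←` (the position with `y + 1 = x`), the element `(f y)^→_{T(x)}` exists and is
`≤ f x`; and (ii) for the lower neighbour `y = x^↓` (the position with `π y + 1 = π x`),
the element `(f y)^↑_{T(x)}` exists and is `≤ f x`. -/
theorem statement8 {k n : ℕ} (π : Equiv.Perm (Fin k)) (τ : Equiv.Perm (Fin n))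
    (hπ : Avoids321 π) (hπr : Rigid π) (hτ : Avoids321 τ)
    (f : Fin k → Fin n) (hf : RigidMapping π τ f) :
    IsEmbedding π τ f ↔
      ∀ x : Fin k,
        (∀ y : Fin k, (y : ℕ) + 1 = (x : ℕ) →
          (UpperElt π x → ∃ q : Fin n, IsNextRight (UpperElt τ) (f y) q ∧ q ≤ f x) ∧
          (LowerElt π x → ∃ q : Fin n, IsNextRight (LowerElt τ) (f y) q ∧ q ≤ f x)) ∧
        (∀ y : Fin k, ((π y : ℕ)) + 1 = ((π x : ℕ)) →
          (UpperElt π x → ∃ q : Fin n, IsNextAbove τ (UpperElt τ) (f y) q ∧ q ≤ f x) ∧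
          (LowerElt π x → ∃ q : Fin n, IsNextAbove τ (LowerElt τ) (f y) q ∧ q ≤ f x)) := by
  classical
  constructor
  · rintro ⟨hm, hv⟩ x
    refine ⟨fun y hy => ?_, fun y hy => ?_⟩
    · have hfyx : f y < f x := hm (Fin.lt_def.mpr (by omega))
      exact ⟨fun hx => nextRight_exists (hf.1 x hx) hfyx,
             fun hx => nextRight_exists (hf.2 x hx) hfyx⟩
    · have hfyx : τ (f y) < τ (f x) := (hv y x).mp (Fin.lt_def.mpr (by omega))
      exact ⟨fun hx => nextAbove_exists τ (fun i j hi hj => upper_mono hτ hi hj)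
                (hf.1 x hx) hfyx,
             fun hx => nextAbove_exists τ (fun i j hi hj => lower_mono hτ hi hj)
                (hf.2 x hx) hfyx⟩
  · intro H
    have hm : StrictMono f := by
      apply strictMono_of_succ
      intro i j hij
      rcases hπr j with hj | hj
      · obtain ⟨q, hq, hqle⟩ := ((H j).1 i hij).1 hj
        exact lt_of_lt_of_le hq.2.1 hqle
      · obtain ⟨q, hq, hqle⟩ := ((H j).1 i hij).2 hj
        exact lt_of_lt_of_le hq.2.1 hqle
    have key : ∀ x y : Fin k, (π y : ℕ) + 1 = (π x : ℕ) → τ (f y) < τ (f x) := by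
      intro x y hxy
      rcases hπr x with hx | hx
      · obtain ⟨q, hq, hqle⟩ := ((H x).2 y hxy).1 hx
        have hle : τ q ≤ τ (f x) := by
          rcases eq_or_lt_of_le hqle with h | h
          · rw [h]
          · exact le_of_lt (upper_mono hτ hq.1 (hf.1 x hx) h)
        exact lt_of_lt_of_le hq.2.1 hle
      · obtain ⟨q, hq, hqle⟩ := ((H x).2 y hxy).2 hx
        have hle : τ q ≤ τ (f x) := by
          rcases eq_or_lt_of_le hqle with h | h
          · rw [h]
          · exact le_of_lt (lower_mono hτ hq.1 (hf.2 x hx) h)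
        exact lt_of_lt_of_le hq.2.1 hle
    have hG : StrictMono (fun v : Fin k => τ (f (π.symm v))) := by
      apply strictMono_of_succ
      intro v w hvw
      exact key (π.symm w) (π.symm v) (by simpa using hvw)
    refine ⟨hm, fun i j => ⟨fun h => ?_, fun h => ?_⟩⟩
    · simpa using hG h
    · by_contra hn
      push_neg at hn
      rcases eq_or_lt_of_le hn with he | hl
      · exact absurd h (by rw [π.injective he]; exact lt_irrefl _)
      · have := hG hl
        simp only [Equiv.symm_apply_apply] at this
        exact absurd h (not_lt.mpr (le_of_lt this))
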